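/- arXiv:2507.12094 — 2 statements merged into one kernel-verified Lean document; each statement's English description precedes it below -/
import Mathlib

section
/- Let f1, f2 be probability distributions supported on [0,1] with equal means. Then sup over 1-Lipschitz convex functions U : [0,1] → ℝ of ∫ U d f1 − ∫ U d f2 equals 2 · max over t ∈ [0,1] of (S1(t) − S2(t)), where Si(t) := ∫₀ᵗ Fi(p) dp is the integral of the CDF of fi. -/
open MeasureTheory ProbabilityTheory Set

/-!
Testing against the hinge `(p - t)⁺` turns `∫ U df₁ - ∫ U df₂` into `S₁(t) - S₂(t)` (layer-cake
formula and equal means), and `|p - t| = 2 (p - t)⁺ - (p - t)` turns it into twice that; this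
gives `≥`. Conversely, let `M = max (S₁ - S₂)`. The piecewise-linear interpolant of a convex
1-Lipschitz `U` on a grid is an affine function plus hinges at the grid points, weighted by the
(nonnegative) slope increments; summation by parts bounds its gap by `M` times the total increase
of the slopes, which is at most `2` because the slopes lie in `[-1, 1]`. The interpolants converge
uniformly to `U`.
-/

section Interpolation

variable {U : ℝ → ℝ} {t : ℕ → ℝ} {n : ℕ}

lemma LipschitzOnWith.abs_slope_le {f : ℝ → ℝ} {K : NNReal} {s : Set ℝ}
    (hf : LipschitzOnWith K f s) {a b : ℝ} (ha : a ∈ s) (hb : b ∈ s) : |slope f a b| ≤ K := by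
  rw [slope_def_field, abs_div]
  exact div_le_of_le_mul₀ (abs_nonneg _) K.2
    (by simpa [Real.dist_eq] using hf.dist_le_mul b hb a ha)

lemma ConvexOn.slope_le_slope {f : ℝ → ℝ} {s : Set ℝ} (hf : ConvexOn ℝ s f) {x y z : ℝ}
    (hx : x ∈ s) (hy : y ∈ s) (hz : z ∈ s) (hxy : x < y) (hyz : y < z) :
    slope f x y ≤ slope f y z := by
  rw [slope_comm]
  exact hf.slope_mono hy ⟨hx, hxy.ne⟩ ⟨hz, hyz.ne'⟩ (hxy.trans hyz).le

lemma exists_lt_mem_Icc_succ (t : ℕ → ℝ) (hn : 0 < n) {p : ℝ} (hp : p ∈ Icc (t 0) (t n)) :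
    ∃ k < n, p ∈ Icc (t k) (t (k + 1)) := by
  set k := Nat.findGreatest (fun i => t i ≤ p) (n - 1)
  have hkn : k ≤ n - 1 := Nat.findGreatest_le _
  refine ⟨k, by omega, Nat.findGreatest_spec (P := fun i => t i ≤ p) (Nat.zero_le _) hp.1, ?_⟩
  rcases hkn.lt_or_eq with hkn | hkn
  · exact (not_le.1 (Nat.findGreatest_is_greatest (P := fun i => t i ≤ p) k.lt_succ_self hkn)).le
  · rw [hkn, Nat.sub_add_cancel hn]
    exact hp.2

lemma max_sub_zero_sub_max_sub_zero_mono {a b x y : ℝ} (hab : a ≤ b) (hxy : x ≤ y) :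
    max (x - a) 0 - max (x - b) 0 ≤ max (y - a) 0 - max (y - b) 0 := by
  simp only [max_def]
  split_ifs <;> linarith

lemma sum_range_max_sub_zero_sub {p : ℝ} (hp : p ∈ Icc (t 0) (t n)) :
    ∑ j ∈ Finset.range n, (max (p - t j) 0 - max (p - t (j + 1)) 0) = p - t 0 := by
  rw [Finset.sum_range_sub', max_eq_left (sub_nonneg.2 hp.1), max_eq_right (sub_nonpos.2 hp.2),
    sub_zero]

/-- The ramp `max (p - t j) 0 - max (p - t (j + 1)) 0` rises from `0` to `t (j + 1) - t j` across
the `j`-th cell, so this is the piecewise-linear interpolant of `U` at the nodes `t 0, …, t n`. -/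
noncomputable def piecewiseLinearInterp (U : ℝ → ℝ) (t : ℕ → ℝ) (n : ℕ) (p : ℝ) : ℝ :=
  U (t 0) + ∑ j ∈ Finset.range n,
    slope U (t j) (t (j + 1)) * (max (p - t j) 0 - max (p - t (j + 1)) 0)

lemma continuous_piecewiseLinearInterp : Continuous (piecewiseLinearInterp U t n) := by
  unfold piecewiseLinearInterp
  fun_prop

lemma piecewiseLinearInterp_apply_node (ht : Monotone t) {k : ℕ} (hk : k ≤ n) :
    piecewiseLinearInterp U t n (t k) = U (t k) := by
  obtain ⟨m, rfl⟩ := Nat.exists_eq_add_of_le hk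
  have hlow : ∀ j < k, slope U (t j) (t (j + 1)) * (max (t k - t j) 0 - max (t k - t (j + 1)) 0)
      = U (t (j + 1)) - U (t j) := fun j hj => by
    rw [max_eq_left (sub_nonneg.2 (ht (by omega))), max_eq_left (sub_nonneg.2 (ht hj)),
      sub_sub_sub_cancel_left, mul_comm]
    exact sub_smul_slope U _ _
  have hhigh : ∀ j, slope U (t (k + j)) (t (k + j + 1)) *
      (max (t k - t (k + j)) 0 - max (t k - t (k + j + 1)) 0) = 0 := fun j => by
    rw [max_eq_right (sub_nonpos.2 (ht (by omega))), max_eq_right (sub_nonpos.2 (ht (by omega))),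
      sub_zero, mul_zero]
  rw [piecewiseLinearInterp, Finset.sum_range_add,
    Finset.sum_congr rfl (fun j hj => hlow j (Finset.mem_range.1 hj)),
    Finset.sum_range_sub (fun j => U (t j)), Finset.sum_congr rfl (fun j _ => hhigh j),
    Finset.sum_const_zero]
  ring

lemma abs_piecewiseLinearInterp_sub_le (ht : Monotone t)
    (hU : ∀ j < n, |slope U (t j) (t (j + 1))| ≤ 1) {x y : ℝ} (hx : x ∈ Icc (t 0) (t n))
    (hy : y ∈ Icc (t 0) (t n)) (hxy : x ≤ y) :
    |piecewiseLinearInterp U t n y - piecewiseLinearInterp U t n x| ≤ y - x := by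
  set r : ℕ → ℝ → ℝ := fun j p => max (p - t j) 0 - max (p - t (j + 1)) 0
  have hr : ∀ j, 0 ≤ r j y - r j x := fun j =>
    sub_nonneg.2 (max_sub_zero_sub_max_sub_zero_mono (ht j.le_succ) hxy)
  calc |piecewiseLinearInterp U t n y - piecewiseLinearInterp U t n x|
      = |∑ j ∈ Finset.range n, slope U (t j) (t (j + 1)) * (r j y - r j x)| := by
        simp only [piecewiseLinearInterp, r, mul_sub, Finset.sum_sub_distrib,
          add_sub_add_left_eq_sub]
    _ ≤ ∑ j ∈ Finset.range n, (r j y - r j x) := by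
        refine (Finset.abs_sum_le_sum_abs _ _).trans (Finset.sum_le_sum fun j hj => ?_)
        rw [abs_mul, abs_of_nonneg (hr j)]
        exact mul_le_of_le_one_left (hr j) (hU j (Finset.mem_range.1 hj))
    _ = y - x := by
        rw [Finset.sum_sub_distrib, sum_range_max_sub_zero_sub hy, sum_range_max_sub_zero_sub hx]
        ring

lemma abs_sub_piecewiseLinearInterp_le (ht : Monotone t) (hn : 0 < n)
    (hU : LipschitzOnWith 1 U (Icc (t 0) (t n))) {δ : ℝ} (hδ : ∀ j < n, t (j + 1) - t j ≤ δ)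
    {p : ℝ} (hp : p ∈ Icc (t 0) (t n)) : |U p - piecewiseLinearInterp U t n p| ≤ 2 * δ := by
  have hnode : ∀ j ≤ n, t j ∈ Icc (t 0) (t n) := fun j hj => ⟨ht j.zero_le, ht hj⟩
  obtain ⟨k, hk, hpk⟩ := exists_lt_mem_Icc_succ t hn hp
  have hgap : p - t k ≤ δ := by linarith [hpk.2, hδ k hk]
  have hUk : |U p - U (t k)| ≤ p - t k := by
    simpa [Real.dist_eq, abs_of_nonneg (sub_nonneg.2 hpk.1)] using
      hU.dist_le_mul p hp (t k) (hnode k hk.le)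
  have hVk : |piecewiseLinearInterp U t n p - piecewiseLinearInterp U t n (t k)| ≤ p - t k :=
    abs_piecewiseLinearInterp_sub_le ht
      (fun j hj => by simpa using hU.abs_slope_le (hnode j hj.le) (hnode (j + 1) hj))
      (hnode k hk.le) hp hpk.1
  rw [piecewiseLinearInterp_apply_node ht hk.le] at hVk
  calc |U p - piecewiseLinearInterp U t n p|
      ≤ |U p - U (t k)| + |U (t k) - piecewiseLinearInterp U t n p| := abs_sub_le _ _ _
    _ ≤ 2 * δ := by rw [abs_sub_comm (U (t k))]; linarith

end Interpolation

lemma sum_mul_sub_succ_le {s D : ℕ → ℝ} {n : ℕ} {M : ℝ} (hs : ∀ j, j + 1 < n → s j ≤ s (j + 1))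
    (hD : ∀ j < n, D j ≤ M) (hD0 : D 0 = 0) (hDn : D n = 0) :
    ∑ j ∈ Finset.range n, s j * (D j - D (j + 1)) ≤ (s (n - 1) - s 0) * M := by
  have hparts := Finset.sum_range_by_parts s (fun j => D j - D (j + 1)) n
  simp only [smul_eq_mul, Finset.sum_range_sub', hD0, hDn, sub_self, mul_zero, zero_sub] at hparts
  rw [hparts, ← Finset.sum_range_sub s (n - 1), Finset.sum_mul, ← Finset.sum_neg_distrib]
  refine Finset.sum_le_sum fun j hj => ?_
  have hj := Finset.mem_range.1 hj
  rw [mul_neg, neg_neg]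
  exact mul_le_mul_of_nonneg_left (hD _ (by omega)) (sub_nonneg.2 (hs j (by omega)))

lemma ContinuousOn.integrable_of_ae_mem {X : Type*} [TopologicalSpace X] [T2Space X]
    [MeasurableSpace X] [OpensMeasurableSpace X] {μ : Measure X} [IsFiniteMeasureOnCompacts μ]
    {K : Set X} (hK : IsCompact K) (hμ : ∀ᵐ x ∂μ, x ∈ K) {g : X → ℝ} (hg : ContinuousOn g K) :
    Integrable g μ := by
  rw [← Measure.restrict_eq_self_of_ae_mem hμ]
  exact hg.integrableOn_compact hK

lemma abs_integral_sub_integral_le {α : Type*} [MeasurableSpace α] {μ : Measure α}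
    [IsProbabilityMeasure μ] {g h : α → ℝ} (hg : Integrable g μ) (hh : Integrable h μ) {ε : ℝ}
    (hgh : ∀ᵐ x ∂μ, |g x - h x| ≤ ε) : |∫ x, g x ∂μ - ∫ x, h x ∂μ| ≤ ε := by
  rw [← integral_sub hg hh]
  simpa using norm_integral_le_of_norm_le_const (μ := μ) (f := fun x => g x - h x) hgh

/-- The super-cumulative distribution function `S(t) = ∫₀ᵗ F`. -/
noncomputable def scdf (μ : Measure ℝ) (t : ℝ) : ℝ := ∫ u in 0..t, cdf μ u

lemma continuous_scdf (μ : Measure ℝ) : Continuous (scdf μ) :=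
  intervalIntegral.continuous_primitive (fun _ _ => (monotone_cdf μ).intervalIntegrable) 0

section OneMeasure

variable {μ : Measure ℝ} [IsProbabilityMeasure μ]

theorem integral_max_sub_zero_eq_scdf (hμ : ∀ᵐ p ∂μ, 0 ≤ p) {t : ℝ} (ht : 0 ≤ t) :
    ∫ p, max (t - p) 0 ∂μ = scdf μ t := by
  have hle : (fun p => max (t - p) 0) ≤ᵐ[μ] fun _ => t :=
    hμ.mono fun p hp => max_le (by linarith) ht
  have hint : Integrable (fun p => max (t - p) 0) μ :=
    .of_bound (by fun_prop) t (hle.mono fun p hp => by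
      rwa [Real.norm_of_nonneg (le_max_right _ _)])
  have hlevel : ∀ s ∈ Ioc 0 t, μ.real {p | s ≤ max (t - p) 0} = cdf μ (t - s) := fun s hs => by
    rw [cdf_eq_real]
    congr 1
    ext p
    simp only [mem_ofPred_eq, mem_Iic, le_max_iff, not_le.2 hs.1, or_false]
    exact le_sub_comm
  rw [hint.integral_eq_integral_Ioc_meas_le (ae_of_all _ fun _ => le_max_right _ _) hle,
    setIntegral_congr_fun measurableSet_Ioc hlevel, ← intervalIntegral.integral_of_le ht,
    intervalIntegral.integral_comp_sub_left (cdf μ), sub_self, sub_zero, scdf]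

variable (hμ : ∀ᵐ p ∂μ, p ∈ Icc 0 1)
include hμ

theorem integral_max_sub_zero_eq_integral_sub_add_scdf {t : ℝ} (ht : 0 ≤ t) :
    ∫ p, max (p - t) 0 ∂μ = ∫ p, p ∂μ - t + scdf μ t := by
  have hint : ∀ g : ℝ → ℝ, Continuous g → Integrable g μ := fun g hg =>
    hg.continuousOn.integrable_of_ae_mem isCompact_Icc hμ
  have hsplit : (fun p => max (p - t) 0) = fun p => (p - t) + max (t - p) 0 := by
    ext p
    rcases le_total p t with h | h
    · rw [max_eq_right (by linarith), max_eq_left (by linarith)]; ring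
    · rw [max_eq_left (by linarith), max_eq_right (by linarith)]; ring
  rw [hsplit, integral_add (hint _ (by fun_prop)) (hint _ (by fun_prop)),
    integral_sub (hint (fun p => p) continuous_id) (integrable_const t), integral_const,
    integral_max_sub_zero_eq_scdf (hμ.mono fun _ hp => hp.1) ht, probReal_univ, one_smul]

theorem integral_abs_sub_eq_integral_sub_add_two_mul_scdf {t : ℝ} (ht : 0 ≤ t) :
    ∫ p, |p - t| ∂μ = ∫ p, p ∂μ - t + 2 * scdf μ t := by
  have hint : ∀ g : ℝ → ℝ, Continuous g → Integrable g μ := fun g hg =>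
    hg.continuousOn.integrable_of_ae_mem isCompact_Icc hμ
  have hsplit : (fun p => |p - t|) = fun p => 2 * max (p - t) 0 - (p - t) := by
    ext p
    rcases le_total p t with h | h
    · rw [abs_of_nonpos (by linarith), max_eq_right (by linarith)]; ring
    · rw [abs_of_nonneg (by linarith), max_eq_left (by linarith)]; ring
  rw [hsplit, integral_sub ((hint _ (by fun_prop)).const_mul 2) (hint _ (by fun_prop)),
    integral_const_mul, integral_max_sub_zero_eq_integral_sub_add_scdf hμ ht,
    integral_sub (hint (fun p => p) continuous_id) (integrable_const t), integral_const,
    probReal_univ, one_smul]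
  ring

theorem integral_piecewiseLinearInterp (U : ℝ → ℝ) (t : ℕ → ℝ) (n : ℕ) :
    ∫ p, piecewiseLinearInterp U t n p ∂μ = U (t 0) + ∑ j ∈ Finset.range n,
      slope U (t j) (t (j + 1)) * (∫ p, max (p - t j) 0 ∂μ - ∫ p, max (p - t (j + 1)) 0 ∂μ) := by
  have hint : ∀ τ, Integrable (fun p => max (p - τ) 0) μ := fun τ =>
    (by fun_prop : Continuous _).continuousOn.integrable_of_ae_mem isCompact_Icc hμ
  have hterm : ∀ j ∈ Finset.range n, Integrable
      (fun p => slope U (t j) (t (j + 1)) * (max (p - t j) 0 - max (p - t (j + 1)) 0)) μ :=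
    fun j _ => ((hint _).sub (hint _)).const_mul _
  simp only [piecewiseLinearInterp]
  rw [integral_add (integrable_const _) (integrable_finsetSum _ hterm), integral_const,
    integral_finsetSum _ hterm, probReal_univ, one_smul]
  congr 1
  refine Finset.sum_congr rfl fun j _ => ?_
  rw [integral_const_mul, integral_sub (hint _) (hint _)]

end OneMeasure

section TwoMeasures

variable {μ ν : Measure ℝ} [IsProbabilityMeasure μ] [IsProbabilityMeasure ν]
  (hμ : ∀ᵐ p ∂μ, p ∈ Icc 0 1) (hν : ∀ᵐ p ∂ν, p ∈ Icc 0 1) (hmean : ∫ p, p ∂μ = ∫ p, p ∂ν)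
include hμ hν hmean

theorem integral_sub_integral_max_sub_zero {t : ℝ} (ht : 0 ≤ t) :
    ∫ p, max (p - t) 0 ∂μ - ∫ p, max (p - t) 0 ∂ν = scdf μ t - scdf ν t := by
  rw [integral_max_sub_zero_eq_integral_sub_add_scdf hμ ht,
    integral_max_sub_zero_eq_integral_sub_add_scdf hν ht, hmean]
  ring

theorem integral_sub_integral_abs_sub {t : ℝ} (ht : 0 ≤ t) :
    ∫ p, |p - t| ∂μ - ∫ p, |p - t| ∂ν = 2 * (scdf μ t - scdf ν t) := by
  rw [integral_abs_sub_eq_integral_sub_add_two_mul_scdf hμ ht,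
    integral_abs_sub_eq_integral_sub_add_two_mul_scdf hν ht, hmean]
  ring

theorem scdf_one_eq : scdf μ 1 = scdf ν 1 := by
  have hzero : ∀ ρ : Measure ℝ, (∀ᵐ p ∂ρ, p ∈ Icc 0 1) → ∫ p, max (p - 1) 0 ∂ρ = 0 := fun ρ hρ =>
    integral_eq_zero_of_ae (hρ.mono fun p hp => max_eq_right (by linarith [hp.2]))
  have hgap := integral_sub_integral_max_sub_zero hμ hν hmean zero_le_one
  rw [hzero μ hμ, hzero ν hν, sub_self] at hgap
  linarith

theorem integral_sub_integral_piecewiseLinearInterp {U : ℝ → ℝ} {t : ℕ → ℝ} {n : ℕ}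
    (ht : ∀ j ≤ n, 0 ≤ t j) :
    ∫ p, piecewiseLinearInterp U t n p ∂μ - ∫ p, piecewiseLinearInterp U t n p ∂ν
      = ∑ j ∈ Finset.range n, slope U (t j) (t (j + 1)) *
          ((scdf μ (t j) - scdf ν (t j)) - (scdf μ (t (j + 1)) - scdf ν (t (j + 1)))) := by
  rw [integral_piecewiseLinearInterp hμ, integral_piecewiseLinearInterp hν, add_sub_add_left_eq_sub,
    ← Finset.sum_sub_distrib]
  refine Finset.sum_congr rfl fun j hj => ?_
  have hj := Finset.mem_range.1 hj
  rw [← integral_sub_integral_max_sub_zero hμ hν hmean (ht j hj.le),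
    ← integral_sub_integral_max_sub_zero hμ hν hmean (ht (j + 1) hj)]
  ring

variable {M : ℝ} (hD : ∀ t ∈ Icc (0 : ℝ) 1, scdf μ t - scdf ν t ≤ M)
  {U : ℝ → ℝ} (hUc : ConvexOn ℝ (Icc 0 1) U) (hUl : LipschitzOnWith 1 U (Icc 0 1))
include hD hUc hUl

theorem integral_sub_integral_piecewiseLinearInterp_le {t : ℕ → ℝ} {n : ℕ} (ht : StrictMono t)
    (ht0 : t 0 = 0) (htn : t n = 1) :
    ∫ p, piecewiseLinearInterp U t n p ∂μ - ∫ p, piecewiseLinearInterp U t n p ∂ν ≤ 2 * M := by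
  have hnode : ∀ j ≤ n, t j ∈ Icc 0 1 := fun j hj =>
    ⟨ht0 ▸ ht.monotone j.zero_le, htn ▸ ht.monotone hj⟩
  have hn : 0 < n := Nat.pos_of_ne_zero (by rintro rfl; simp [ht0] at htn)
  have hM : 0 ≤ M := by simpa [scdf] using hD 0 ⟨le_rfl, zero_le_one⟩
  set s : ℕ → ℝ := fun j => slope U (t j) (t (j + 1))
  have hs_mono : ∀ j, j + 1 < n → s j ≤ s (j + 1) := fun j hj =>
    hUc.slope_le_slope (hnode j (by omega)) (hnode (j + 1) hj.le) (hnode (j + 2) hj)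
      (ht (by omega)) (ht (by omega))
  have hs_abs : ∀ j < n, |s j| ≤ 1 := fun j hj => by
    simpa using hUl.abs_slope_le (hnode j hj.le) (hnode (j + 1) hj)
  rw [integral_sub_integral_piecewiseLinearInterp hμ hν hmean fun j hj => (hnode j hj).1]
  calc _ ≤ (s (n - 1) - s 0) * M :=
        sum_mul_sub_succ_le hs_mono (fun j hj => hD _ (hnode j hj.le)) (by simp [ht0, scdf])
          (by rw [htn, scdf_one_eq hμ hν hmean, sub_self])
    _ ≤ 2 * M := mul_le_mul_of_nonneg_right
        (by linarith [abs_le.1 (hs_abs (n - 1) (by omega)), abs_le.1 (hs_abs 0 hn)]) hM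

theorem integral_sub_integral_le_of_convexOn :
    ∫ p, U p ∂μ - ∫ p, U p ∂ν ≤ 2 * M := by
  refine le_of_forall_pos_lt_add fun ε hε => ?_
  obtain ⟨n, hn⟩ := exists_nat_one_div_lt (div_pos hε four_pos)
  have hN : (0 : ℝ) < (n + 1 : ℕ) := by positivity
  set t : ℕ → ℝ := fun j => j / (n + 1 : ℕ)
  have ht : StrictMono t := fun i j hij => div_lt_div_of_pos_right (by exact_mod_cast hij) hN
  have ht0 : t 0 = 0 := by simp [t]
  have htn : t (n + 1) = 1 := div_self hN.ne'
  have hmesh : ∀ j < n + 1, t (j + 1) - t j ≤ 1 / (n + 1 : ℕ) := fun j _ =>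
    le_of_eq (by simp only [t]; push_cast; ring)
  have happrox : ∀ ρ : Measure ℝ, [IsProbabilityMeasure ρ] → (∀ᵐ p ∂ρ, p ∈ Icc 0 1) →
      |∫ p, U p ∂ρ - ∫ p, piecewiseLinearInterp U t (n + 1) p ∂ρ| ≤ 2 * (1 / (n + 1 : ℕ)) :=
    fun ρ _ hρ => abs_integral_sub_integral_le
      (hUl.continuousOn.integrable_of_ae_mem isCompact_Icc hρ)
      (continuous_piecewiseLinearInterp.continuousOn.integrable_of_ae_mem isCompact_Icc hρ)
      (hρ.mono fun p hp => abs_sub_piecewiseLinearInterp_le ht.monotone n.succ_pos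
        (by rwa [ht0, htn]) hmesh (by rwa [ht0, htn]))
  have hV := integral_sub_integral_piecewiseLinearInterp_le hμ hν hmean hD hUc hUl ht ht0 htn
  push_cast at happrox
  linarith [abs_le.1 (happrox μ hμ), abs_le.1 (happrox ν hν)]

end TwoMeasures

/-- SCDF representation: for equal-mean distributions on `[0,1]`, the supremum over 1-Lipschitz
convex `U` of `∫ U df1 - ∫ U df2` equals twice the maximal gap of the integrated CDFs. -/
theorem sup_lipschitz_convex_gap_eq_two_mul_max_scdf_gap
    (f1 f2 : Measure ℝ) [IsProbabilityMeasure f1] [IsProbabilityMeasure f2]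
    (h1 : f1 (Set.Icc 0 1) = 1) (h2 : f2 (Set.Icc 0 1) = 1)
    (hmean : ∫ p, p ∂f1 = ∫ p, p ∂f2) :
    sSup {d : ℝ | ∃ U : ℝ → ℝ, ConvexOn ℝ (Set.Icc 0 1) U ∧
        LipschitzOnWith 1 U (Set.Icc 0 1) ∧
        d = (∫ p in Set.Icc (0:ℝ) 1, U p ∂f1) - ∫ p in Set.Icc (0:ℝ) 1, U p ∂f2}
      = 2 * sSup {g : ℝ | ∃ t ∈ Set.Icc (0:ℝ) 1,
          g = (∫ p in (0:ℝ)..t, cdf f1 p) - ∫ p in (0:ℝ)..t, cdf f2 p} := by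
  have hμ : ∀ᵐ p ∂f1, p ∈ Icc (0 : ℝ) 1 :=
    (ae_mem_iff_measure_eq measurableSet_Icc.nullMeasurableSet).2 (by rw [h1, measure_univ])
  have hν : ∀ᵐ p ∂f2, p ∈ Icc (0 : ℝ) 1 :=
    (ae_mem_iff_measure_eq measurableSet_Icc.nullMeasurableSet).2 (by rw [h2, measure_univ])
  simp only [Measure.restrict_eq_self_of_ae_mem hμ, Measure.restrict_eq_self_of_ae_mem hν]
  set A := {d : ℝ | ∃ U : ℝ → ℝ, ConvexOn ℝ (Icc 0 1) U ∧ LipschitzOnWith 1 U (Icc 0 1) ∧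
    d = ∫ p, U p ∂f1 - ∫ p, U p ∂f2}
  set B := {g : ℝ | ∃ t ∈ Icc (0 : ℝ) 1, g = scdf f1 t - scdf f2 t}
  change sSup A = 2 * sSup B
  have hB : BddAbove B := (isCompact_Icc.bddAbove_image
    ((continuous_scdf f1).sub (continuous_scdf f2)).continuousOn).mono
      (by rintro _ ⟨t, ht, rfl⟩; exact ⟨t, ht, rfl⟩)
  have hA : ∀ d ∈ A, d ≤ 2 * sSup B := by
    rintro _ ⟨U, hUc, hUl, rfl⟩
    exact integral_sub_integral_le_of_convexOn hμ hν hmean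
      (fun t ht => le_csSup hB ⟨t, ht, rfl⟩) hUc hUl
  have hAbs : ∀ t ∈ Icc (0 : ℝ) 1, 2 * (scdf f1 t - scdf f2 t) ∈ A := fun t ht =>
    ⟨fun p => |p - t|, by simpa [Real.dist_eq] using convexOn_dist t (convex_Icc (0 : ℝ) 1),
      by simpa [Real.dist_eq] using (LipschitzWith.dist_left t).lipschitzOnWith,
      (integral_sub_integral_abs_sub hμ hν hmean ht.1).symm⟩
  refine le_antisymm (csSup_le ⟨_, hAbs 0 ⟨le_rfl, zero_le_one⟩⟩ hA) ?_
  rw [← le_div_iff₀' two_pos]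
  refine csSup_le ⟨0, 0, ⟨le_rfl, zero_le_one⟩, by simp [scdf]⟩ ?_
  rintro _ ⟨t, ht, rfl⟩
  rw [le_div_iff₀' two_pos]
  exact le_csSup ⟨_, hA⟩ (hAbs t ht)
end

section
/- There is no function D mapping pairs of predictors (each a distribution f on [0,1] together with κ : [0,1] → [0,1]) to nonnegative reals that simultaneously satisfies: (completeness) D(μ, ν) = O(infoGap(μ,ν)^c) for some constant c > 0; (soundness) D(μ, ν) = Ω(infoGap(μ,ν)^s) for some constant s > 0; and (continuity) |D(μ,ν) − D(μ′,ν′)| = O(EMD(f_μ, f_{μ′}) + EMD(f_ν, f_{ν′})). Concretely: for every ε ∈ (0, 1/4), letting μ be the perfectly calibrated point mass at 1/2, and ν the predictor placing mass 1/2 at 1/2+ε with κ_ν(1/2+ε)=0 and mass 1/2 at 1/2−ε with κ_ν(1/2−ε)=1, one has infoGap(μ,μ)=0, infoGap(μ,ν)=Θ(1), yet EMD(f_ν, f_μ) = ε; hence any D satisfying completeness and soundness must violate continuity as ε → 0. -/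
open MeasureTheory ProbabilityTheory

/-- A predictor: a prediction distribution on `[0,1]` together with a true expected outcome
function `κ` conditional on the prediction. -/
structure Predictor where
  f : Measure ℝ
  prob : IsProbabilityMeasure f
  supp : f (Set.Icc 0 1) = 1
  κ : ℝ → ℝ
  κ_meas : Measurable κ
  κ_mem : ∀ p, κ p ∈ Set.Icc (0:ℝ) 1

/-- The integrated CDF (super-cumulative distribution function). -/
noncomputable def SCDF (f : Measure ℝ) (t : ℝ) : ℝ := ∫ p in (0:ℝ)..t, cdf f p

/-- The informativeness gap of `ν` relative to `μ`, via the generalized SCDF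
representation: twice the maximal gap of the corrected integrated CDFs. -/
noncomputable def infoGap (μ ν : Predictor) : ℝ :=
  2 * sSup {g : ℝ | ∃ t ∈ Set.Icc (0:ℝ) 1,
      g = (SCDF μ.f t + ∫ p in Set.Icc (0:ℝ) t, (p - μ.κ p) ∂μ.f)
          - (SCDF ν.f t + ∫ p in Set.Icc (0:ℝ) t, (p - ν.κ p) ∂ν.f)}

/-- The earth mover's (1-Wasserstein) distance between prediction distributions. -/
noncomputable def EMD (f g : Measure ℝ) : ℝ :=
  sInf {c : ℝ | ∃ π : Measure (ℝ × ℝ), ∃ _ : IsProbabilityMeasure π,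
      π.fst = f ∧ π.snd = g ∧ c = ∫ x, |x.1 - x.2| ∂π}

noncomputable def muP : Predictor where
  f := Measure.dirac (1/2)
  prob := inferInstance
  supp := Measure.dirac_apply_of_mem (by norm_num)
  κ := fun _ => 1/2
  κ_meas := measurable_const
  κ_mem := fun p => by norm_num

noncomputable def nuP : Predictor where
  f := Measure.dirac (1/2)
  prob := inferInstance
  supp := Measure.dirac_apply_of_mem (by norm_num)
  κ := fun _ => 1
  κ_meas := measurable_const
  κ_mem := fun p => by norm_num

lemma gap_self : infoGap muP muP = 0 := by
  unfold infoGap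
  have : {g : ℝ | ∃ t ∈ Set.Icc (0:ℝ) 1,
      g = (SCDF muP.f t + ∫ p in Set.Icc (0:ℝ) t, (p - muP.κ p) ∂muP.f)
          - (SCDF muP.f t + ∫ p in Set.Icc (0:ℝ) t, (p - muP.κ p) ∂muP.f)} = {0} := by
    ext g
    constructor
    · rintro ⟨t, ht, rfl⟩; simp
    · rintro hg; exact ⟨0, by norm_num, by simp at hg; simp [hg]⟩
  rw [this, csSup_singleton]; ring

lemma gap_munu : infoGap muP nuP = 1 := by
  have key : ∀ t : ℝ,
      (SCDF muP.f t + ∫ p in Set.Icc (0:ℝ) t, (p - muP.κ p) ∂muP.f)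
        - (SCDF nuP.f t + ∫ p in Set.Icc (0:ℝ) t, (p - nuP.κ p) ∂nuP.f)
      = if (1/2:ℝ) ≤ t then 1/2 else 0 := by
    intro t
    have hf : nuP.f = muP.f := rfl
    rw [hf]
    have h1 : (∫ p in Set.Icc (0:ℝ) t, (p - muP.κ p) ∂muP.f)
        = if (1/2:ℝ) ∈ Set.Icc (0:ℝ) t then ((1:ℝ)/2 - 1/2) else 0 := by
      show (∫ p in Set.Icc (0:ℝ) t, (p - 1/2) ∂Measure.dirac (1/2:ℝ)) = _
      rw [setIntegral_dirac]
    have h2 : (∫ p in Set.Icc (0:ℝ) t, (p - nuP.κ p) ∂muP.f)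
        = if (1/2:ℝ) ∈ Set.Icc (0:ℝ) t then ((1:ℝ)/2 - 1) else 0 := by
      show (∫ p in Set.Icc (0:ℝ) t, (p - 1) ∂Measure.dirac (1/2:ℝ)) = _
      rw [setIntegral_dirac]
    rw [h1, h2]
    have hmem : (1/2:ℝ) ∈ Set.Icc (0:ℝ) t ↔ (1/2:ℝ) ≤ t := by
      simp [Set.mem_Icc]
    by_cases h : (1/2:ℝ) ≤ t
    · rw [if_pos (hmem.mpr h), if_pos (hmem.mpr h), if_pos h]; ring
    · rw [if_neg (fun hx => h (hmem.mp hx)), if_neg (fun hx => h (hmem.mp hx)), if_neg h]; ring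
  unfold infoGap
  have hsup : sSup {g : ℝ | ∃ t ∈ Set.Icc (0:ℝ) 1,
      g = (SCDF muP.f t + ∫ p in Set.Icc (0:ℝ) t, (p - muP.κ p) ∂muP.f)
          - (SCDF nuP.f t + ∫ p in Set.Icc (0:ℝ) t, (p - nuP.κ p) ∂nuP.f)} = 1/2 := by
    apply le_antisymm
    · apply csSup_le
      · exact ⟨1/2, 1, by norm_num, by rw [key]; norm_num⟩
      · rintro x ⟨t, ht, rfl⟩
        rw [key]
        split <;> norm_num
    · apply le_csSup
      · refine ⟨1/2, ?_⟩
        rintro x ⟨t, ht, rfl⟩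
        rw [key]; split <;> norm_num
      · exact ⟨1, by norm_num, by rw [key]; norm_num⟩
  rw [hsup]; ring

lemma emd_self : EMD (Measure.dirac (1/2:ℝ)) (Measure.dirac (1/2:ℝ)) = 0 := by
  have hmem : (0:ℝ) ∈ {c : ℝ | ∃ π : Measure (ℝ × ℝ), ∃ _ : IsProbabilityMeasure π,
      π.fst = Measure.dirac (1/2:ℝ) ∧ π.snd = Measure.dirac (1/2:ℝ) ∧ c = ∫ x, |x.1 - x.2| ∂π} := by
    refine ⟨Measure.dirac ((1/2:ℝ), (1/2:ℝ)), inferInstance, ?_, ?_, ?_⟩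
    · rw [Measure.fst, Measure.map_dirac' measurable_fst]
    · rw [Measure.snd, Measure.map_dirac' measurable_snd]
    · rw [integral_dirac]; norm_num
  apply le_antisymm
  · exact csInf_le ⟨0, by rintro c ⟨π, hπ, _, _, rfl⟩; exact integral_nonneg fun x => abs_nonneg _⟩ hmem
  · exact le_csInf ⟨0, hmem⟩ (by rintro c ⟨π, hπ, _, _, rfl⟩; exact integral_nonneg fun x => abs_nonneg _)

/-- Trilemma: no informativeness measure `D` on pairs of predictors is simultaneously
(approximately) complete, (approximately) sound, and continuous with respect to the earth
mover's distance between the prediction distributions. -/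
theorem informativeness_measure_trilemma
    (D : Predictor → Predictor → ℝ) (hD : ∀ μ ν, 0 ≤ D μ ν)
    (hcomplete : ∃ c > (0:ℝ), ∃ C > (0:ℝ), ∀ μ ν, D μ ν ≤ C * infoGap μ ν ^ c)
    (hsound : ∃ s > (0:ℝ), ∃ C' > (0:ℝ), ∀ μ ν, C' * infoGap μ ν ^ s ≤ D μ ν) :
    ¬ ∃ L > (0:ℝ), ∀ μ μ' ν ν' : Predictor,
        |D μ ν - D μ' ν'| ≤ L * (EMD μ.f μ'.f + EMD ν.f ν'.f) := by
  obtain ⟨c, hc, C, hC, hcomp⟩ := hcomplete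
  obtain ⟨s, hs, C', hC', hsnd⟩ := hsound
  rintro ⟨L, hL, hcont⟩
  have h1 : D muP muP = 0 := by
    have := hcomp muP muP
    rw [gap_self, Real.zero_rpow hc.ne', mul_zero] at this
    exact le_antisymm this (hD _ _)
  have h2 : C' ≤ D muP nuP := by
    have := hsnd muP nuP
    rwa [gap_munu, Real.one_rpow, mul_one] at this
  have h3 := hcont muP muP nuP muP
  have hf1 : EMD muP.f muP.f = 0 := emd_self
  have hf2 : EMD nuP.f muP.f = 0 := emd_self
  rw [hf1, hf2, h1] at h3
  have : |D muP nuP| ≤ 0 := by simpa using h3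
  have := abs_nonneg (D muP nuP)
  have habs : D muP nuP = 0 := by
    have := abs_le.mp ‹|D muP nuP| ≤ 0›
    linarith [this.1, this.2]
  linarith
end
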